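/- For natural numbers X, Y, S with Y ≥ X, and m = min(⌊X/2⌋, S), the identity Ξ(X,Y,S) = Σ_{i=0}^{m} (−1)^i · C(X, 2i) · (2i−1)!! · Ξ(0,Y,S−i) holds, where Ξ(X,Y,S) = Σ_{Δ ∈ Ω(X,Y,S)} ∏_{j=1}^{S} e(Δ,j) and (−1)!! = 1. -/

import Mathlib

/-- The heights attained immediately after each up-step of a trajectory
(listed in order of occurrence): `e(Δ,1), …, e(Δ,S)`. -/
def upsList (L : List ℕ) : List ℕ :=
  ((L.zip L.tail).filter (fun p => p.2 == p.1 + 1)).map Prod.snd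

/-- `L` is a ±1-step trajectory (of nonnegative integers) from `Y` to `X`. -/
def IsTraj (Y X : ℕ) (L : List ℕ) : Prop :=
  L.head? = some Y ∧ L.getLast? = some X ∧
    L.Chain' (fun a b => b = a + 1 ∨ a = b + 1)

/-- `Ω(X,Y,S)`: nonnegative ±1-step trajectories from `Y` to `X` with exactly `S` up-steps. -/
def Omega (X Y S : ℕ) : Set (List ℕ) :=
  {L | IsTraj Y X L ∧ (upsList L).length = S}

/-- `Ξ(X,Y,S) = Σ_{Δ ∈ Ω(X,Y,S)} ∏_{j=1}^{S} e(Δ,j)`. -/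
noncomputable def XiZ (X Y S : ℕ) : ℤ :=
  ∑ᶠ L ∈ Omega X Y S, ((upsList L).prod : ℤ)

/-!
Splitting off the last step of a trajectory gives
`Ξ(X+1,Y,S+1) = (X+1) Ξ(X,Y,S) + Ξ(X+2,Y,S+1)`: the last step is either an up-step from `X`,
which multiplies the weight by `X+1`, or a down-step from `X+2`. Together with
`Ξ(0,Y,S+1) = Ξ(1,Y,S+1)` and `Ξ(X,Y,0) = 1` for `X ≤ Y`, this determines `Ξ(X,Y,S)` from
`Ξ(0,Y,·)`. Solved for `Ξ(X+2,·,·)` it is the recurrence `He_{n+2} = x He_{n+1} - (n+1) He_n`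
of the probabilists' Hermite polynomials, and `(-1)^i C(n,2i) (2i-1)!!` is the coefficient of
`x^{n-2i}` in `He_n`; so the right-hand side satisfies the same recursion.
-/

open Finset Nat

lemma upsList_cons_cons (a b : ℕ) (t : List ℕ) :
    upsList (a :: b :: t) = (if b = a + 1 then [b] else []) ++ upsList (b :: t) := by
  by_cases h : b = a + 1 <;> simp [upsList, h]

lemma upsList_concat {t : List ℕ} {a : ℕ} (h : t.getLast? = some a) (x : ℕ) :
    upsList (t ++ [x]) = upsList t ++ if x = a + 1 then [x] else [] := by
  induction t with
  | nil => simp at h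
  | cons b t ih =>
    cases t with
    | nil =>
      obtain rfl : b = a := by simpa using h
      by_cases hx : x = b + 1 <;> simp [upsList, hx]
    | cons c t =>
      rw [List.getLast?_cons_cons] at h
      rw [List.cons_append, List.cons_append, upsList_cons_cons, ← List.cons_append, ih h,
        upsList_cons_cons, List.append_assoc]

lemma isTraj_iff {Y X : ℕ} {L : List ℕ} :
    IsTraj Y X L ↔ L.head? = some Y ∧ L.getLast? = some X ∧
      L.IsChain (fun a b => b = a + 1 ∨ a = b + 1) :=
  Iff.rfl

lemma isTraj_concat_iff {Y X x : ℕ} {t : List ℕ} :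
    IsTraj Y X (t ++ [x]) ↔ x = X ∧
      (t = [] ∧ x = Y ∨ ∃ a, t.getLast? = some a ∧ (x = a + 1 ∨ a = x + 1) ∧ IsTraj Y a t) := by
  rcases t.eq_nil_or_concat' with rfl | ⟨s, a, rfl⟩
  · simp [isTraj_iff, eq_comm, and_comm]
  · simp [isTraj_iff, List.isChain_append, List.head?_append, List.getLast?_append]
    tauto

lemma mem_omega {X Y S : ℕ} {L : List ℕ} :
    L ∈ Omega X Y S ↔ IsTraj Y X L ∧ (upsList L).length = S :=
  Iff.rfl

lemma nil_notMem_omega (X Y S : ℕ) : [] ∉ Omega X Y S := by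
  simp [mem_omega, isTraj_iff]

lemma getLast?_of_mem_omega {X Y S : ℕ} {L : List ℕ} (h : L ∈ Omega X Y S) :
    L.getLast? = some X :=
  h.1.2.1

lemma concat_mem_omega_iff {X Y S x : ℕ} {t : List ℕ} :
    t ++ [x] ∈ Omega X Y S ↔ x = X ∧
      (t = [] ∧ X = Y ∧ S = 0 ∨
        (∃ X' S', X = X' + 1 ∧ S = S' + 1 ∧ t ∈ Omega X' Y S') ∨ t ∈ Omega (X + 1) Y S) := by
  simp only [mem_omega, isTraj_concat_iff]
  constructor
  · rintro ⟨⟨rfl, ⟨rfl, rfl⟩ | ⟨a, ha, rfl | rfl, htraj⟩⟩, rfl⟩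
    · simp [upsList]
    · simp [upsList_concat ha, htraj]
    · exact ⟨rfl, .inr (.inr ⟨htraj, by simp [upsList_concat ha, Nat.ne_of_lt]⟩)⟩
  · rintro ⟨rfl, ⟨rfl, rfl, rfl⟩ | ⟨X', S', rfl, rfl, htraj, rfl⟩ | ⟨htraj, rfl⟩⟩
    · simp [upsList]
    · exact ⟨⟨rfl, .inr ⟨X', htraj.2.1, .inl rfl, htraj⟩⟩, by simp [upsList_concat htraj.2.1]⟩
    · exact ⟨⟨rfl, .inr ⟨_, htraj.2.1, .inr rfl, htraj⟩⟩,
        by simp [upsList_concat htraj.2.1, Nat.ne_of_lt]⟩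

lemma le_add_of_mem_omega {X Y S : ℕ} {L : List ℕ} (h : L ∈ Omega X Y S) : X ≤ Y + S := by
  induction L using List.reverseRecOn generalizing X S with
  | nil => exact absurd h (nil_notMem_omega X Y S)
  | append_singleton t x ih =>
    obtain ⟨rfl, ⟨-, rfl, rfl⟩ | ⟨X', S', rfl, rfl, ht⟩ | ht⟩ := concat_mem_omega_iff.1 h
    · omega
    · have := ih ht; omega
    · have := ih ht; omega

lemma omega_subset (X Y S : ℕ) :
    Omega X Y S ⊆ {[Y]} ∪ (· ++ [X]) ''
      ((⋃ (_ : 0 < X ∧ 0 < S), Omega (X - 1) Y (S - 1)) ∪ Omega (X + 1) Y S) := by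
  intro L hL
  rcases L.eq_nil_or_concat' with rfl | ⟨t, x, rfl⟩
  · exact absurd hL (nil_notMem_omega X Y S)
  obtain ⟨rfl, ⟨rfl, rfl, -⟩ | ⟨X', S', rfl, rfl, ht⟩ | ht⟩ := concat_mem_omega_iff.1 hL
  · exact .inl rfl
  · exact .inr ⟨t, .inl (Set.mem_iUnion.2 ⟨by omega, ht⟩), rfl⟩
  · exact .inr ⟨t, .inr ht, rfl⟩

lemma omega_finite (X Y S : ℕ) : (Omega X Y S).Finite := by
  -- `S + (Y + S - X)` is the number of steps of any trajectory in `Omega X Y S`.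
  induction h : S + (Y + S - X) using Nat.strong_induction_on generalizing X S with
  | _ n ih =>
  refine .subset ((Set.finite_singleton _).union (.image _ (.union ?_ ?_))) (omega_subset X Y S)
  · exact Set.finite_iUnion fun hXS => ih _ (by omega) _ _ rfl
  · by_cases hX : X + 1 ≤ Y + S
    · exact ih _ (by omega) _ _ rfl
    · exact Set.finite_empty.subset fun L hL => hX (le_add_of_mem_omega hL)

lemma omega_succ_succ (X Y S : ℕ) :
    Omega (X + 1) Y (S + 1) = (· ++ [X + 1]) '' (Omega X Y S ∪ Omega (X + 2) Y (S + 1)) := by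
  ext L
  rcases L.eq_nil_or_concat' with rfl | ⟨t, x, rfl⟩
  · simp [nil_notMem_omega]
  · simp [concat_mem_omega_iff, and_comm, eq_comm]

lemma omega_zero_succ (Y S : ℕ) :
    Omega 0 Y (S + 1) = (· ++ [0]) '' Omega 1 Y (S + 1) := by
  ext L
  rcases L.eq_nil_or_concat' with rfl | ⟨t, x, rfl⟩
  · simp [nil_notMem_omega]
  · simp [concat_mem_omega_iff, and_comm, eq_comm]

lemma omega_zero_of_lt {X Y : ℕ} (h : X < Y) :
    Omega X Y 0 = (· ++ [X]) '' Omega (X + 1) Y 0 := by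
  ext L
  rcases L.eq_nil_or_concat' with rfl | ⟨t, x, rfl⟩
  · simp [nil_notMem_omega]
  · simp [concat_mem_omega_iff, and_comm, eq_comm, h.ne]

lemma omega_self_zero (Y : ℕ) : Omega Y Y 0 = {[Y]} := by
  ext L
  rcases L.eq_nil_or_concat' with rfl | ⟨t, x, rfl⟩
  · simp [nil_notMem_omega]
  · have : t ∉ Omega (Y + 1) Y 0 := fun ht => by simpa using le_add_of_mem_omega ht
    simp [concat_mem_omega_iff, this, List.singleton_eq_append_iff, and_comm, eq_comm]

lemma xiZ_succ_succ (X Y S : ℕ) :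
    XiZ (X + 1) Y (S + 1) = (X + 1 : ℤ) * XiZ X Y S + XiZ (X + 2) Y (S + 1) := by
  have hdisj : Disjoint (Omega X Y S) (Omega (X + 2) Y (S + 1)) :=
    Set.disjoint_left.2 fun L h₁ h₂ => by
      simpa [getLast?_of_mem_omega h₁] using getLast?_of_mem_omega h₂
  rw [XiZ, omega_succ_succ, finsum_mem_image (List.append_left_injective _).injOn,
    finsum_mem_union hdisj (omega_finite ..) (omega_finite ..), XiZ, XiZ, mul_finsum_mem]
  congr 1 <;> refine finsum_mem_congr rfl fun t ht => ?_
  · simp [upsList_concat (getLast?_of_mem_omega ht), mul_comm]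
  · simp [upsList_concat (getLast?_of_mem_omega ht)]

lemma xiZ_zero_succ (Y S : ℕ) : XiZ 0 Y (S + 1) = XiZ 1 Y (S + 1) := by
  rw [XiZ, omega_zero_succ, finsum_mem_image (List.append_left_injective _).injOn, XiZ]
  exact finsum_mem_congr rfl fun t ht => by simp [upsList_concat (getLast?_of_mem_omega ht)]

lemma xiZ_zero_right {X Y : ℕ} (h : X ≤ Y) : XiZ X Y 0 = 1 := by
  induction h using Nat.decreasingInduction with
  | self => simp [XiZ, omega_self_zero, upsList]
  | of_succ X hXY ih =>
    rw [XiZ, omega_zero_of_lt hXY, finsum_mem_image (List.append_left_injective _).injOn, ← ih,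
      XiZ]
    exact finsum_mem_congr rfl fun t ht => by
      simp [upsList_concat (getLast?_of_mem_omega ht), Nat.ne_of_lt]

def hermiteCoeff (n i : ℕ) : ℤ :=
  (-1 : ℤ) ^ i * (n.choose (2 * i) : ℤ) * ((2 * i - 1)‼ : ℤ)

lemma hermiteCoeff_zero_right (n : ℕ) : hermiteCoeff n 0 = 1 := by
  simp [hermiteCoeff]

lemma hermiteCoeff_of_lt {n i : ℕ} (h : n < 2 * i) : hermiteCoeff n i = 0 := by
  simp [hermiteCoeff, choose_eq_zero_of_lt h]

lemma hermiteCoeff_succ_succ (n i : ℕ) :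
    hermiteCoeff (n + 2) (i + 1) = hermiteCoeff (n + 1) (i + 1) - (n + 1) * hermiteCoeff n i := by
  have hchoose : ((n + 1) * n.choose (2 * i) * (2 * i - 1)‼ : ℤ) =
      (n + 1).choose (2 * i + 1) * (2 * i + 1)‼ := by
    norm_cast
    rw [add_one_mul_choose_eq, doubleFactorial_add_one, mul_assoc]
  have hpascal := choose_succ_succ' (n + 1) (2 * i + 1)
  simp only [hermiteCoeff, show 2 * (i + 1) = 2 * i + 1 + 1 by ring, add_tsub_cancel_right,
    hpascal, cast_add]
  linear_combination (-1 : ℤ) ^ i * hchoose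

def hermiteConv (g : ℕ → ℤ) (n S : ℕ) : ℤ :=
  ∑ i ∈ range (S + 1), hermiteCoeff n i * g (S - i)

lemma hermiteConv_zero_right (g : ℕ → ℤ) (n : ℕ) : hermiteConv g n 0 = g 0 := by
  simp [hermiteConv, hermiteCoeff_zero_right]

lemma hermiteConv_of_le_one (g : ℕ → ℤ) {n : ℕ} (hn : n ≤ 1) (S : ℕ) :
    hermiteConv g n S = g S := by
  rw [hermiteConv, sum_range_succ', hermiteCoeff_zero_right,
    sum_eq_zero fun i _ => by rw [hermiteCoeff_of_lt (by omega), zero_mul]]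
  simp

lemma hermiteConv_succ_succ (g : ℕ → ℤ) (n S : ℕ) :
    hermiteConv g (n + 2) (S + 1) =
      hermiteConv g (n + 1) (S + 1) - (n + 1) * hermiteConv g n S := by
  simp only [hermiteConv, sum_range_succ' _ (S + 1), hermiteCoeff_succ_succ,
    hermiteCoeff_zero_right, mul_sum, sub_mul, mul_assoc, sum_sub_distrib, Nat.add_sub_add_right]
  ring

lemma xiZ_eq_hermiteConv {X Y : ℕ} (h : X ≤ Y) (S : ℕ) :
    XiZ X Y S = hermiteConv (XiZ 0 Y) X S := by
  induction X using Nat.twoStepInduction generalizing S with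
  | zero => exact (hermiteConv_of_le_one _ zero_le_one S).symm
  | one =>
    rw [hermiteConv_of_le_one _ le_rfl]
    cases S with
    | zero => rw [xiZ_zero_right h, xiZ_zero_right (Nat.zero_le Y)]
    | succ S => exact (xiZ_zero_succ Y S).symm
  | more n ih₀ ih₁ =>
    cases S with
    | zero => rw [hermiteConv_zero_right, xiZ_zero_right h, xiZ_zero_right (Nat.zero_le Y)]
    | succ S =>
      rw [hermiteConv_succ_succ, ← ih₀ (by omega), ← ih₁ (by omega), xiZ_succ_succ n Y S]
      ring

theorem stmt15 (X Y S : ℕ) (hXY : X ≤ Y) :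
    XiZ X Y S =
      ∑ i ∈ Finset.range (min (X / 2) S + 1),
        (-1 : ℤ) ^ i * (Nat.choose X (2 * i) : ℤ) *
          (Nat.doubleFactorial (2 * i - 1) : ℤ) * XiZ 0 Y (S - i) := by
  rw [xiZ_eq_hermiteConv hXY, hermiteConv]
  refine (sum_subset (range_subset_range.2 (by omega)) fun i hi hi' => ?_).symm
  simp only [mem_range] at hi hi'
  rw [hermiteCoeff_of_lt (by omega), zero_mul]
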